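/- Let X_{ζ₁}, X_{ζ₂}, X_{γ²₁}, X_{γ⁰₁} ∈ g be the matrices obtained by setting the indicated parameter equal to 1 and all other parameters equal to 0. Then the 4-dimensional subspace span{X_{ζ₁}, X_{ζ₂}, X_{γ²₁}, X_{γ⁰₁}} is closed under the matrix commutator, i.e. it is a Lie subalgebra of g. (Equivalently, the complementary left-invariant Pfaffian system spanned by the forms θ¹, θ², ω⁰, ω¹′, ω²′, γ¹₂, γ⁰₂, γ, γ₁, γ₂ on the corresponding Lie group is Frobenius; this subalgebra is the Lie algebra of the structure group G⁽²⁾_M of the reductions appearing in the main embeddability theorem.) -/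

import Mathlib

noncomputable section

open Module

/-- The matrix of the Maurer–Cartan form of `G₂` in its 7-dimensional representation,
as a function of the 14 coframe parameters
`θ¹, θ², ω⁰, ω¹′, ω²′, γ¹₂, ζ₁, ζ₂, γ²₁, γ⁰₁, γ⁰₂, γ, γ₁, γ₂`. -/
def g2mat (t1 t2 w0 w1 w2 g12 z1 z2 g21 g01 g02 gm gam1 gam2 : ℝ) :
    Matrix (Fin 7) (Fin 7) ℝ :=
  !![-z2 - 2*z1, g02, -g01, -(Real.sqrt 2)*gm, gam2, gam1, 0;
     w2, -z2 - z1, -g21, -(Real.sqrt 2)*g01, gm, 0, -gam1;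
     -w1, -g12, -z1, -(Real.sqrt 2)*g02, 0, -gm, -gam2;
     (Real.sqrt 2)*w0, -(Real.sqrt 2)*w1, -(Real.sqrt 2)*w2, 0,
       (Real.sqrt 2)*g02, (Real.sqrt 2)*g01, (Real.sqrt 2)*gm;
     t2, -w0, 0, (Real.sqrt 2)*w2, z1, g21, g01;
     t1, 0, w0, (Real.sqrt 2)*w1, g12, z2 + z1, -g02;
     0, -t1, -t2, -(Real.sqrt 2)*w0, w1, -w2, z2 + 2*z1]

/-- The split exceptional Lie algebra `g₂ ⊆ Mat₇(ℝ)`, as the set of all matrices of the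
above form. -/
def g2Set : Set (Matrix (Fin 7) (Fin 7) ℝ) :=
  {X | ∃ t1 t2 w0 w1 w2 g12 z1 z2 g21 g01 g02 gm gam1 gam2 : ℝ,
    X = g2mat t1 t2 w0 w1 w2 g12 z1 z2 g21 g01 g02 gm gam1 gam2}

/-- `X_{ζ₁}`: the coframe dual vector with `ζ₁ = 1` and all other parameters `0`. -/
def Xzeta1 : Matrix (Fin 7) (Fin 7) ℝ := g2mat 0 0 0 0 0 0 1 0 0 0 0 0 0 0

/-- `X_{ζ₂}` -/
def Xzeta2 : Matrix (Fin 7) (Fin 7) ℝ := g2mat 0 0 0 0 0 0 0 1 0 0 0 0 0 0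

/-- `X_{γ²₁}` -/
def Xgamma21 : Matrix (Fin 7) (Fin 7) ℝ := g2mat 0 0 0 0 0 0 0 0 1 0 0 0 0 0

/-- `X_{γ⁰₁}` -/
def Xgamma01 : Matrix (Fin 7) (Fin 7) ℝ := g2mat 0 0 0 0 0 0 0 0 0 1 0 0 0 0

/-! `X_{ζ₁}` and `X_{ζ₂}` are diagonal, and `X_{γ²₁}`, `X_{γ⁰₁}` are simultaneous eigenvectors of
their adjoint actions: along the nonzero entries `(i, j)` of each, the difference `dᵢ - dⱼ` of
diagonal entries is constant. Together with `X_{γ²₁} X_{γ⁰₁} = X_{γ⁰₁} X_{γ²₁} = 0` this puts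
every bracket of two generators back into the span, and bilinearity does the rest. -/

attribute [local instance] LieRing.ofAssociativeRing LieAlgebra.ofAssociativeAlgebra

open Submodule in
theorem lie_mem_span_of_forall_lie_mem {R L : Type*} [CommRing R] [LieRing L] [LieAlgebra R L]
    {s : Set L} (hs : ∀ x ∈ s, ∀ y ∈ s, ⁅x, y⁆ ∈ span R s) {x y : L}
    (hx : x ∈ span R s) (hy : y ∈ span R s) : ⁅x, y⁆ ∈ span R s := by
  induction hx, hy using span_induction₂ with
  | mem_mem x y hx hy => exact hs x hx y hy
  | zero_left y _ => simp
  | zero_right x _ => simp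
  | add_left x y z _ _ _ hxz hyz => simpa only [add_lie] using add_mem hxz hyz
  | add_right x y z _ _ _ hxy hxz => simpa only [lie_add] using add_mem hxy hxz
  | smul_left r x y _ _ hxy => simpa only [smul_lie] using smul_mem _ r hxy
  | smul_right r x y _ _ hxy => simpa only [lie_smul] using smul_mem _ r hxy

namespace Matrix

variable {n R : Type*} [Fintype n] [DecidableEq n] [CommRing R]

theorem lie_diagonal_eq_smul_of_weight {d : n → R} {M : Matrix n n R} {c : R}
    (h : ∀ i j, M i j ≠ 0 → d i - d j = c) : ⁅diagonal d, M⁆ = c • M := by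
  ext i j
  rw [Ring.lie_def, sub_apply, diagonal_mul, mul_diagonal, smul_apply, smul_eq_mul]
  by_cases hM : M i j = 0
  · simp [hM]
  · rw [← h i j hM]
    ring

end Matrix

open Matrix

lemma Xzeta1_eq_diagonal : Xzeta1 = diagonal ![-2, -1, -1, 0, 1, 1, 2] := by
  ext i j
  fin_cases i <;> fin_cases j <;> simp [Xzeta1, g2mat, diagonal]

lemma Xzeta2_eq_diagonal : Xzeta2 = diagonal ![-1, -1, 0, 0, 0, 1, 1] := by
  ext i j
  fin_cases i <;> fin_cases j <;> simp [Xzeta2, g2mat, diagonal]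

@[simp]
lemma lie_Xzeta1_Xzeta2 : ⁅Xzeta1, Xzeta2⁆ = 0 := by
  rw [Xzeta1_eq_diagonal, Xzeta2_eq_diagonal, ← commute_iff_lie_eq]
  exact commute_diagonal _ _

@[simp]
lemma lie_Xzeta1_Xgamma21 : ⁅Xzeta1, Xgamma21⁆ = 0 := by
  rw [Xzeta1_eq_diagonal, lie_diagonal_eq_smul_of_weight (c := 0), zero_smul]
  intro i j
  fin_cases i <;> fin_cases j <;> simp [Xgamma21, g2mat]

@[simp]
lemma lie_Xzeta1_Xgamma01 : ⁅Xzeta1, Xgamma01⁆ = -Xgamma01 := by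
  rw [Xzeta1_eq_diagonal, lie_diagonal_eq_smul_of_weight (c := -1), neg_one_smul]
  intro i j
  fin_cases i <;> fin_cases j <;> norm_num [Xgamma01, g2mat]

@[simp]
lemma lie_Xzeta2_Xgamma21 : ⁅Xzeta2, Xgamma21⁆ = -Xgamma21 := by
  rw [Xzeta2_eq_diagonal, lie_diagonal_eq_smul_of_weight (c := -1), neg_one_smul]
  intro i j
  fin_cases i <;> fin_cases j <;> norm_num [Xgamma21, g2mat]

@[simp]
lemma lie_Xzeta2_Xgamma01 : ⁅Xzeta2, Xgamma01⁆ = -Xgamma01 := by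
  rw [Xzeta2_eq_diagonal, lie_diagonal_eq_smul_of_weight (c := -1), neg_one_smul]
  intro i j
  fin_cases i <;> fin_cases j <;> norm_num [Xgamma01, g2mat]

@[simp]
lemma lie_Xgamma21_Xgamma01 : ⁅Xgamma21, Xgamma01⁆ = 0 := by
  have h₁ : Xgamma21 * Xgamma01 = 0 := by
    ext i j
    fin_cases i <;> fin_cases j <;> simp [Xgamma21, Xgamma01, g2mat, mul_apply, Fin.sum_univ_succ]
  have h₂ : Xgamma01 * Xgamma21 = 0 := by
    ext i j
    fin_cases i <;> fin_cases j <;> simp [Xgamma21, Xgamma01, g2mat, mul_apply, Fin.sum_univ_succ]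
  rw [Ring.lie_def, h₁, h₂, sub_zero]

abbrev G2MGenerators : Set (Matrix (Fin 7) (Fin 7) ℝ) := {Xzeta1, Xzeta2, Xgamma21, Xgamma01}

lemma lie_mem_span_G2MGenerators {x y : Matrix (Fin 7) (Fin 7) ℝ} (hx : x ∈ G2MGenerators)
    (hy : y ∈ G2MGenerators) : ⁅x, y⁆ ∈ Submodule.span ℝ G2MGenerators := by
  have hγ21 : Xgamma21 ∈ Submodule.span ℝ G2MGenerators := Submodule.subset_span (by simp)
  have hγ01 : Xgamma01 ∈ Submodule.span ℝ G2MGenerators := Submodule.subset_span (by simp)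
  simp only [G2MGenerators, Set.mem_insert_iff, Set.mem_singleton_iff] at hx hy
  rcases hx with rfl | rfl | rfl | rfl <;> rcases hy with rfl | rfl | rfl | rfl <;>
    first
    | simp [hγ21, hγ01]
    | rw [← lie_skew]
      simp [hγ21, hγ01]

/-- The 4-dimensional subspace `span{X_{ζ₁}, X_{ζ₂}, X_{γ²₁}, X_{γ⁰₁}}` of `g₂` is closed
under the matrix commutator: it is a Lie subalgebra (the Lie algebra of the structure
group `G⁽²⁾_M` of the reductions in the main embeddability theorem). -/
theorem span_G2M_structure_algebra_closed :
    ∀ X ∈ Submodule.span ℝ ({Xzeta1, Xzeta2, Xgamma21, Xgamma01} :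
        Set (Matrix (Fin 7) (Fin 7) ℝ)),
      ∀ Y ∈ Submodule.span ℝ ({Xzeta1, Xzeta2, Xgamma21, Xgamma01} :
        Set (Matrix (Fin 7) (Fin 7) ℝ)),
        X * Y - Y * X ∈ Submodule.span ℝ ({Xzeta1, Xzeta2, Xgamma21, Xgamma01} :
          Set (Matrix (Fin 7) (Fin 7) ℝ)) := by
  intro X hX Y hY
  rw [← Ring.lie_def]
  exact lie_mem_span_of_forall_lie_mem (fun x hx y hy ↦ lie_mem_span_G2MGenerators hx hy) hX hY
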